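/- Let N ≥ 3 and 1 ≤ K ≤ N−2 with 2K < N. Let X' be an (N−K)-element multiset of points of ℝ^d with range (maximal pairwise distance) D, and let y_1, …, y_K ∈ ℝ^d be points such that ‖y_j − x‖ > D·√(N−K−1) for every 1 ≤ j ≤ K and every x ∈ X'. Then every (N−K)-element submultiset of X' ∪ {y_1,…,y_K} that minimizes G_{N−K} among all (N−K)-element submultisets contains none of the points y_1, …, y_K; consequently the unique minimizer is X' itself. -/

import Mathlib

open MeasureTheory Filter Metric

noncomputable section

/-- The energy `G_n` of a finite configuration of points (given as a multiset):
the sum of the squared distances from the points to their barycentre. -/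
def energy {E : Type*} [NormedAddCommGroup E] [NormedSpace ℝ E] (s : Multiset E) : ℝ :=
  (s.map fun x => ‖x - (s.card : ℝ)⁻¹ • s.sum‖ ^ 2).sum

/-!
Summing Huygens' identity `∑ ‖x - c‖² = G(s) + n ‖μ - c‖²` over the points `c` of `s` gives
`2 n G(s) = ∑_{x, z ∈ s} ‖x - z‖²`, so `n` points of range `D` have energy at most `(n - 1) D² / 2`,
while a configuration containing two points `a, b` has energy at least `‖a - b‖² / 2`.
An `(N - K)`-element competitor containing some `y j` also contains a point `x` of `X'`, because
`K < N - K`; its energy then exceeds `‖y j - x‖² / 2 > (N - K - 1) D² / 2 ≥ G(X')`.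
-/

namespace Multiset

variable {α : Type*}

theorem exists_mem_of_le_add_of_card_lt {s t u : Multiset α} (h : s ≤ t + u)
    (hcard : card u < card s) : ∃ x ∈ s, x ∈ t := by
  classical
  have hsub : s - u ≤ t := tsub_le_iff_right.mpr h
  have hpos : 0 < card (s - u) := by
    have := card_le_card (le_tsub_add (a := u) (b := s))
    rw [card_add] at this
    omega
  obtain ⟨x, hx⟩ := card_pos_iff_exists_mem.mp hpos
  exact ⟨x, mem_of_le tsub_le_self hx, mem_of_le hsub hx⟩

theorem le_of_le_add_of_forall_notMem {s t u : Multiset α} (h : s ≤ t + u)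
    (hu : ∀ x ∈ u, x ∉ s) : s ≤ t := by
  classical
  rw [le_iff_count] at h ⊢
  intro x
  by_cases hx : x ∈ s
  · have := h x
    rwa [count_add, count_eq_zero.mpr fun hxu => hu x hxu hx, add_zero] at this
  · simp [count_eq_zero.mpr hx]

end Multiset

theorem Real.mul_sq_lt_sq_of_mul_sqrt_lt {D m r : ℝ} (hD : 0 ≤ D) (hm : 0 ≤ m)
    (h : D * √m < r) : m * D ^ 2 < r ^ 2 := by
  have := pow_lt_pow_left₀ h (by positivity) two_ne_zero
  rwa [mul_pow, Real.sq_sqrt hm, mul_comm] at this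

section Energy

variable {E : Type*} [NormedAddCommGroup E]

def barycentre [Module ℝ E] (s : Multiset E) : E := (s.card : ℝ)⁻¹ • s.sum

theorem energy_eq_sum_norm_sub_barycentre [NormedSpace ℝ E] (s : Multiset E) :
    energy s = (s.map fun x => ‖x - barycentre s‖ ^ 2).sum := rfl

theorem card_smul_barycentre [Module ℝ E] (s : Multiset E) :
    (s.card : ℝ) • barycentre s = s.sum := by
  rcases eq_or_ne s 0 with rfl | hs
  · simp
  · exact smul_inv_smul₀ (by simpa using hs) _

theorem dist_sq_div_two_le_energy [NormedSpace ℝ E] {s : Multiset E} {a b : E}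
    (hab : {a, b} ≤ s) : dist a b ^ 2 / 2 ≤ energy s := by
  obtain ⟨r, hs⟩ := Multiset.le_iff_exists_add.mp hab
  rw [energy_eq_sum_norm_sub_barycentre]
  set μ := barycentre s
  have hr : 0 ≤ (r.map fun x => ‖x - μ‖ ^ 2).sum :=
    Multiset.sum_nonneg fun _ hx => by
      obtain ⟨z, -, rfl⟩ := Multiset.mem_map.mp hx
      positivity
  have htri : dist a b ≤ ‖a - μ‖ + ‖b - μ‖ := by
    simpa only [dist_eq_norm, norm_sub_rev μ b] using dist_triangle a μ b
  rw [hs, Multiset.map_add, Multiset.sum_add]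
  simp only [Multiset.insert_eq_cons, Multiset.map_cons, Multiset.map_singleton,
    Multiset.sum_cons, Multiset.sum_singleton]
  nlinarith [sq_nonneg (‖a - μ‖ - ‖b - μ‖), dist_nonneg (x := a) (y := b)]

theorem sum_map_norm_sub_sq_le {s : Multiset E} {x : E} {D : ℝ} (hx : x ∈ s)
    (hD : ∀ z ∈ s, dist z x ≤ D) :
    (s.map fun z => ‖z - x‖ ^ 2).sum ≤ (s.card - 1) * D ^ 2 := by
  classical
  rw [← Multiset.cons_erase hx] at hD ⊢
  have hrow := Multiset.sum_le_card_nsmul ((s.erase x).map fun z => ‖z - x‖ ^ 2) (D ^ 2) <| by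
    rintro _ hmem
    obtain ⟨z, hz, rfl⟩ := Multiset.mem_map.mp hmem
    rw [← dist_eq_norm]
    exact pow_le_pow_left₀ dist_nonneg (hD z (Multiset.mem_cons_of_mem hz)) 2
  rw [Multiset.card_map, nsmul_eq_mul] at hrow
  simpa using hrow

variable [InnerProductSpace ℝ E]

theorem sum_map_norm_sub_sq (s : Multiset E) (c : E) :
    (s.map fun x => ‖x - c‖ ^ 2).sum
      = (s.map fun x => ‖x‖ ^ 2).sum - 2 * inner ℝ s.sum c + s.card * ‖c‖ ^ 2 := by
  induction s using Multiset.induction_on with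
  | empty => simp
  | cons a s ih =>
    simp only [Multiset.map_cons, Multiset.sum_cons, Multiset.card_cons, inner_add_left]
    rw [ih, norm_sub_sq_real]
    push_cast
    ring

/-- Huygens' parallel axis theorem. -/
theorem sum_map_norm_sub_sq_eq_energy_add (s : Multiset E) (c : E) :
    (s.map fun x => ‖x - c‖ ^ 2).sum = energy s + s.card * ‖barycentre s - c‖ ^ 2 := by
  rw [energy_eq_sum_norm_sub_barycentre, sum_map_norm_sub_sq s c, sum_map_norm_sub_sq s,
    norm_sub_sq_real, ← card_smul_barycentre s, real_inner_smul_left, real_inner_smul_left,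
    real_inner_self_eq_norm_sq]
  ring

theorem two_mul_card_mul_energy (s : Multiset E) :
    2 * s.card * energy s = (s.map fun x => (s.map fun z => ‖z - x‖ ^ 2).sum).sum := by
  simp only [sum_map_norm_sub_sq_eq_energy_add, norm_sub_rev (barycentre s)]
  rw [Multiset.sum_map_add, Multiset.sum_map_mul_left, ← energy_eq_sum_norm_sub_barycentre,
    Multiset.map_const', Multiset.sum_replicate, nsmul_eq_mul]
  ring

theorem energy_le_of_dist_le {s : Multiset E} (hs : s ≠ 0) {D : ℝ}
    (hD : ∀ x ∈ s, ∀ z ∈ s, dist x z ≤ D) :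
    energy s ≤ (s.card - 1) * D ^ 2 / 2 := by
  have hcard : (0 : ℝ) < s.card := by exact_mod_cast Multiset.card_pos.mpr hs
  have hrows := Multiset.sum_le_card_nsmul (s.map fun x => (s.map fun z => ‖z - x‖ ^ 2).sum)
    ((s.card - 1) * D ^ 2) <| by
      rintro _ hr
      obtain ⟨x, hx, rfl⟩ := Multiset.mem_map.mp hr
      exact sum_map_norm_sub_sq_le hx fun z hz => hD z hz x hx
  rw [← two_mul_card_mul_energy, Multiset.card_map, nsmul_eq_mul] at hrows
  rw [le_div_iff₀ two_pos]
  nlinarith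

theorem energy_lt_of_far_mem {X s : Multiset E} (hX : X ≠ 0) {D : ℝ}
    (hD : ∀ x ∈ X, ∀ z ∈ X, dist x z ≤ D) {p x : E}
    (hfar : ∀ z ∈ X, (X.card - 1) * D ^ 2 < dist p z ^ 2)
    (hp : p ∈ s) (hxX : x ∈ X) (hx : x ∈ s) : energy X < energy s := by
  have hpx : p ≠ x := by
    rintro rfl
    have hcard : (1 : ℝ) ≤ X.card := by exact_mod_cast Multiset.card_pos.mpr hX
    have := hfar p hxX
    rw [dist_self] at this
    nlinarith [sq_nonneg D]
  have hpair : {p, x} ≤ s :=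
    (Multiset.cons_le_of_notMem (by simpa using hpx)).mpr ⟨hp, Multiset.singleton_le.mpr hx⟩
  calc energy X ≤ (X.card - 1) * D ^ 2 / 2 := energy_le_of_dist_le hX hD
    _ < dist p x ^ 2 / 2 := by linarith [hfar x hxX]
    _ ≤ energy s := dist_sq_div_two_le_energy hpair

end Energy

theorem stmt3_general {d N K : ℕ} (h2K : 2 * K < N)
    (X' : Multiset (EuclideanSpace ℝ (Fin d))) (hcard : X'.card = N - K) (D : ℝ)
    (hD : IsGreatest {r : ℝ | ∃ x ∈ X', ∃ y ∈ X', dist x y = r} D)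
    (y : Fin K → EuclideanSpace ℝ (Fin d))
    (hfar : ∀ j : Fin K, ∀ x ∈ X', D * Real.sqrt ((N : ℝ) - K - 1) < dist (y j) x) :
    ∀ s : Multiset (EuclideanSpace ℝ (Fin d)),
      s ≤ X' + ↑(List.ofFn y) → s.card = N - K →
      (∀ u : Multiset (EuclideanSpace ℝ (Fin d)),
        u ≤ X' + ↑(List.ofFn y) → u.card = N - K → energy s ≤ energy u) →
      (∀ j : Fin K, y j ∉ s) ∧ s = X' := by
  intro s hs hscard hmin
  have hKM : K < N - K := by omega
  have hX' : X' ≠ 0 := Multiset.card_pos.mp (by omega)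
  have hD0 : 0 ≤ D := by
    obtain ⟨x, -, z, -, rfl⟩ := hD.1
    exact dist_nonneg
  have hDX : ∀ x ∈ X', ∀ z ∈ X', dist x z ≤ D := fun x hx z hz => hD.2 ⟨x, hx, z, hz, rfl⟩
  have hcard' : (X'.card : ℝ) - 1 = (N : ℝ) - K - 1 := by
    rw [hcard, Nat.cast_sub (by omega)]
  have hfar' : ∀ j, ∀ x ∈ X', (X'.card - 1 : ℝ) * D ^ 2 < dist (y j) x ^ 2 := by
    intro j x hx
    rw [hcard']
    refine Real.mul_sq_lt_sq_of_mul_sqrt_lt hD0 ?_ (hfar j x hx)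
    rw [← hcard', sub_nonneg]
    exact_mod_cast (by omega : 1 ≤ X'.card)
  have hnoy : ∀ j, y j ∉ s := by
    intro j hj
    obtain ⟨x, hxs, hxX⟩ :=
      Multiset.exists_mem_of_le_add_of_card_lt hs (by simpa [hscard] using hKM)
    exact (hmin X' (Multiset.le_add_right _ _) hcard).not_gt
      (energy_lt_of_far_mem hX' hDX (hfar' j) hj hxX hxs)
  have hsX : s ≤ X' := Multiset.le_of_le_add_of_forall_notMem hs fun v hv => by
    obtain ⟨j, rfl⟩ := List.mem_ofFn.mp (Multiset.mem_coe.mp hv)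
    exact hnoy j
  exact ⟨hnoy, Multiset.eq_of_le_of_card_le hsX (by rw [hcard, hscard])⟩

/-- If `2K < N` and all the distances between the `K` new points `y j` and the points of the
old core `X'` (an `(N-K)`-element multiset with range `D`) exceed `D·√(N-K-1)`, then every
energy-minimizing `(N-K)`-element submultiset of `X' + {y 1, …, y K}` contains none of the
points `y j`; consequently the unique minimizer is `X'` itself. -/
theorem stmt3 {d N K : ℕ} (hN : 3 ≤ N) (hK1 : 1 ≤ K) (hK2 : K ≤ N - 2) (h2K : 2 * K < N)
    (X' : Multiset (EuclideanSpace ℝ (Fin d))) (hcard : X'.card = N - K) (D : ℝ)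
    (hD : IsGreatest {r : ℝ | ∃ x ∈ X', ∃ y ∈ X', dist x y = r} D)
    (y : Fin K → EuclideanSpace ℝ (Fin d))
    (hfar : ∀ j : Fin K, ∀ x ∈ X', D * Real.sqrt ((N : ℝ) - K - 1) < dist (y j) x) :
    ∀ s : Multiset (EuclideanSpace ℝ (Fin d)),
      s ≤ X' + ↑(List.ofFn y) → s.card = N - K →
      (∀ u : Multiset (EuclideanSpace ℝ (Fin d)),
        u ≤ X' + ↑(List.ofFn y) → u.card = N - K → energy s ≤ energy u) →
      (∀ j : Fin K, y j ∉ s) ∧ s = X' :=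
  stmt3_general h2K X' hcard D hD y hfar
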